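/- Let W be a finite-dimensional real normed vector space and D a linear endomorphism of W such that exp(D) − id is invertible. Let f : ℝ → W be continuous with f(t + 1) = f(t) for all t, and define g(t) := (exp(D) − id)⁻¹ ( ∫_0^1 exp(s·D)( f(t + s) ) ds ). Then g is differentiable, g(t + 1) = g(t) for all t, and g'(t) + D(g(t)) = f(t) for every t ∈ ℝ; moreover g is the unique differentiable 1-periodic function with this property. -/

import Mathlib

open NormedSpace

set_option maxHeartbeats 1000000
set_option synthInstance.maxHeartbeats 1000000

/-- The function `g(t) = (exp D − id)⁻¹ (∫_0^1 exp(s•D)(f(t+s)) ds)`. -/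
noncomputable def periodicSol {W : Type*} [NormedAddCommGroup W] [NormedSpace ℝ W]
    [FiniteDimensional ℝ W] (D : W →L[ℝ] W) (f : ℝ → W) : ℝ → W :=
  fun t => Ring.inverse (exp D - 1 : W →L[ℝ] W) (∫ s in (0:ℝ)..1, exp (s • D) (f (t + s)))

section Aux

variable {W : Type*} [NormedAddCommGroup W] [NormedSpace ℝ W] [FiniteDimensional ℝ W]
  (D : W →L[ℝ] W)

/-- exponents of multiples of `D` multiply. -/
lemma expAdd (a b : ℝ) :
    exp ((a + b) • D) = exp (a • D) * exp (b • D) := by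
  rw [add_smul]
  letI : NormedAlgebra ℚ (W →L[ℝ] W) := .restrictScalars ℚ ℝ _
  exact exp_add_of_commute (((Commute.refl D).smul_left a).smul_right b)

lemma expMulExpNeg (t : ℝ) :
    exp ((-t) • D) * exp (t • D) = 1 := by
  rw [← expAdd, neg_add_cancel, zero_smul, exp_zero]

lemma contC (f : ℝ → W) (hf : Continuous f) :
    Continuous fun s : ℝ => exp (s • D) (f s) := by
  letI : NormedAlgebra ℚ (W →L[ℝ] W) := .restrictScalars ℚ ℝ _
  exact Continuous.clm_apply (exp_continuous.comp (continuous_id.smul continuous_const)) hf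

lemma inverseCommute {A : W →L[ℝ] W} (hA : IsUnit A) (X : W →L[ℝ] W)
    (h : Commute X A) : Commute X (Ring.inverse A) := by
  have h' : Commute X ((hA.unit : (W →L[ℝ] W)ˣ) : W →L[ℝ] W) := by
    rwa [hA.unit_spec]
  rw [← hA.unit_spec, Ring.inverse_unit]
  exact h'.units_inv_right

/-- The key alternative formula for `periodicSol`. -/
lemma periodicSol_eq (hD : IsUnit (exp D - 1 : W →L[ℝ] W))
    (f : ℝ → W) (hf : Continuous f) (hper : ∀ t : ℝ, f (t + 1) = f t) (t : ℝ) :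
    periodicSol D f t =
      exp ((-t) • D)
        (Ring.inverse (exp D - 1 : W →L[ℝ] W)
            (∫ s in (0:ℝ)..1, exp (s • D) (f s)) +
          ∫ s in (0:ℝ)..t, exp (s • D) (f s)) := by
  set c : ℝ → W := fun s => exp (s • D) (f s) with hc_def
  have hc : Continuous c := contC D f hf
  set A : W →L[ℝ] W := exp D - 1 with hA_def
  set I₀ : W := ∫ s in (0:ℝ)..1, c s with hI0_def
  set G : W := ∫ s in (0:ℝ)..t, c s with hG_def
  -- step 1 : change of variables
  have h1 : (∫ s in (0:ℝ)..1, exp (s • D) (f (t + s)))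
      = ∫ u in t..(t + 1), exp ((-t) • D) (c u) := by
    have := intervalIntegral.integral_comp_add_right
      (fun u : ℝ => exp ((u - t) • D) (f u)) t (a := 0) (b := 1)
    simp only [add_sub_cancel_right, zero_add] at this
    calc (∫ s in (0:ℝ)..1, exp (s • D) (f (t + s)))
        = ∫ s in (0:ℝ)..1, exp (s • D) (f (s + t)) := by
          simp_rw [add_comm t]
      _ = ∫ u in t..(1 + t), exp ((u - t) • D) (f u) := this
      _ = ∫ u in t..(t + 1), exp ((-t) • D) (c u) := by
          rw [add_comm 1 t]
          refine intervalIntegral.integral_congr fun u _ => ?_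
          have : (u - t) • D = (-t + u) • D := by ring_nf
          rw [this, expAdd, ContinuousLinearMap.mul_apply]
  -- step 2 : pull out the constant operator
  have h2 : (∫ u in t..(t + 1), exp ((-t) • D) (c u))
      = exp ((-t) • D) (∫ u in t..(t + 1), c u) :=
    (exp ((-t) • D)).intervalIntegral_comp_comm (hc.intervalIntegrable _ _)
  -- step 3 : split the integral
  have h3 : (∫ u in t..(t + 1), c u) = I₀ + A G := by
    have hsplit1 : (∫ u in t..(0:ℝ), c u) + (∫ u in (0:ℝ)..1, c u)
        = ∫ u in t..(1:ℝ), c u :=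
      intervalIntegral.integral_add_adjacent_intervals
        (hc.intervalIntegrable _ _) (hc.intervalIntegrable _ _)
    have hsplit2 : (∫ u in t..(1:ℝ), c u) + (∫ u in (1:ℝ)..(t+1), c u)
        = ∫ u in t..(t + 1), c u :=
      intervalIntegral.integral_add_adjacent_intervals
        (hc.intervalIntegrable _ _) (hc.intervalIntegrable _ _)
    have hshift : (∫ u in (1:ℝ)..(t+1), c u) = exp D G := by
      have := intervalIntegral.integral_comp_add_right c 1 (a := 0) (b := t)
      rw [zero_add] at this
      rw [← this]
      have : (∫ u in (0:ℝ)..t, c (u + 1)) = ∫ u in (0:ℝ)..t, exp D (c u) := by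
        refine intervalIntegral.integral_congr fun u _ => ?_
        have h1D : ((u : ℝ) + 1) • D = (1 + u) • D := by ring_nf
        simp only [hc_def, hper u, h1D, expAdd, one_smul, ContinuousLinearMap.mul_apply]
      rw [this,
        (exp D).intervalIntegral_comp_comm (hc.intervalIntegrable _ _)]
    have hrev : (∫ u in t..(0:ℝ), c u) = -G := by
      rw [hG_def, intervalIntegral.integral_symm]
    rw [← hsplit2, ← hsplit1, hrev, hshift]
    simp only [hA_def, ContinuousLinearMap.sub_apply, ContinuousLinearMap.one_apply]
    abel
  -- assemble
  have hcomm : Commute (exp ((-t) • D)) (Ring.inverse A) := by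
    refine inverseCommute hD _ ?_
    have : Commute (exp ((-t) • D)) (exp D) := by
      have : Commute ((-t) • D) D := (Commute.refl D).smul_left (-t)
      exact this.exp
    simpa [hA_def, Commute, SemiconjBy, mul_sub, sub_mul] using this
  have hAinvA : ∀ x : W, Ring.inverse A (A x) = x := by
    intro x
    have : (Ring.inverse A * A) x = (1 : W →L[ℝ] W) x := by
      rw [Ring.inverse_mul_cancel A hD]
    simpa [ContinuousLinearMap.mul_apply] using this
  calc periodicSol D f t
      = Ring.inverse A (∫ s in (0:ℝ)..1, exp (s • D) (f (t + s))) := rfl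
    _ = Ring.inverse A (exp ((-t) • D) (I₀ + A G)) := by rw [h1, h2, h3]
    _ = (Ring.inverse A * exp ((-t) • D)) (I₀ + A G) := rfl
    _ = (exp ((-t) • D) * Ring.inverse A) (I₀ + A G) := by rw [hcomm.eq]
    _ = exp ((-t) • D) (Ring.inverse A I₀ + Ring.inverse A (A G)) := by
        rw [ContinuousLinearMap.mul_apply, map_add]
    _ = exp ((-t) • D) (Ring.inverse A I₀ + G) := by rw [hAinvA]

/-- The derivative of the alternative formula. -/
lemma hasDerivAt_sol (f : ℝ → W) (hf : Continuous f) (v : W) (t : ℝ) :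
    HasDerivAt (fun u : ℝ => exp ((-u) • D) (v + ∫ s in (0:ℝ)..u, exp (s • D) (f s)))
      (f t - D (exp ((-t) • D) (v + ∫ s in (0:ℝ)..t, exp (s • D) (f s)))) t := by
  set c : ℝ → W := fun s => exp (s • D) (f s) with hc_def
  have hc : Continuous c := contC D f hf
  have hP : HasDerivAt (fun u : ℝ => exp ((-u) • D)) (exp (t • (-D)) * (-D)) t := by
    have := hasDerivAt_exp_smul_const (𝕂 := ℝ) (-D) t
    simpa only [neg_smul, smul_neg] using this
  have hG : HasDerivAt (fun u : ℝ => v + ∫ s in (0:ℝ)..u, c s) (c t) t := by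
    have := intervalIntegral.integral_hasDerivAt_right
      (f := c) (a := (0:ℝ)) (b := t) (hc.intervalIntegrable _ _)
      (hc.stronglyMeasurable.stronglyMeasurableAtFilter) hc.continuousAt
    simpa using this
  have h := hP.clm_apply hG
  convert h using 1
  have hneg : ∀ u : ℝ, (-u) • D = u • (-D) := fun u => by rw [neg_smul, smul_neg]
  have hcommD : exp (t • (-D)) * D = D * exp (t • (-D)) :=
    (((Commute.refl D).neg_left.smul_left t).exp_left).eq
  have hterm2 : exp (t • (-D)) (c t) = f t := by
    have : exp (t • (-D)) * exp (t • D) = 1 := by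
      rw [← hneg]; exact expMulExpNeg D t
    calc exp (t • (-D)) (c t)
        = (exp (t • (-D)) * exp (t • D)) (f t) := rfl
      _ = f t := by rw [this]; rfl
  rw [hneg t, hterm2]
  have hterm1 : (exp (t • (-D)) * (-D)) (v + ∫ s in (0:ℝ)..t, c s)
      = -(D (exp (t • (-D)) (v + ∫ s in (0:ℝ)..t, c s))) := by
    set x := v + ∫ s in (0:ℝ)..t, c s
    calc (exp (t • (-D)) * (-D)) x
        = -((exp (t • (-D)) * D) x) := by
          simp [ContinuousLinearMap.mul_apply]
      _ = -((D * exp (t • (-D))) x) := by rw [hcommD]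
      _ = -(D (exp (t • (-D)) x)) := rfl
  rw [hterm1]
  abel

end Aux

/-- If `exp D − id` is invertible and `f : ℝ → W` is continuous and `1`-periodic, then
`g(t) = (exp D − id)⁻¹ (∫_0^1 exp(s•D)(f(t+s)) ds)` is differentiable, `1`-periodic, and
solves `g' + D g = f`; moreover it is the unique differentiable `1`-periodic solution. -/
theorem periodic_ode_inverse
    {W : Type*} [NormedAddCommGroup W] [NormedSpace ℝ W] [FiniteDimensional ℝ W]
    (D : W →L[ℝ] W) (hD : IsUnit (exp D - 1 : W →L[ℝ] W))
    (f : ℝ → W) (hf : Continuous f) (hper : ∀ t : ℝ, f (t + 1) = f t) :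
    (Differentiable ℝ (periodicSol D f) ∧
      (∀ t : ℝ, periodicSol D f (t + 1) = periodicSol D f t) ∧
      (∀ t : ℝ, deriv (periodicSol D f) t + D (periodicSol D f t) = f t)) ∧
    (∀ h : ℝ → W, Differentiable ℝ h → (∀ t : ℝ, h (t + 1) = h t) →
      (∀ t : ℝ, deriv h t + D (h t) = f t) → h = periodicSol D f) := by
  set g := periodicSol D f with hg_def
  -- the alternative formula
  set v : W := Ring.inverse (exp D - 1 : W →L[ℝ] W)
      (∫ s in (0:ℝ)..1, exp (s • D) (f s)) with hv_def
  have hkey : g = fun t : ℝ =>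
      exp ((-t) • D) (v + ∫ s in (0:ℝ)..t, exp (s • D) (f s)) :=
    funext fun t => periodicSol_eq D hD f hf hper t
  have hDeriv : ∀ t : ℝ, HasDerivAt g (f t - D (g t)) t := by
    intro t
    rw [hkey]
    exact hasDerivAt_sol D f hf v t
  have hdiff : Differentiable ℝ g := fun t => (hDeriv t).differentiableAt
  have hgper : ∀ t : ℝ, g (t + 1) = g t := by
    intro t
    show periodicSol D f (t + 1) = periodicSol D f t
    unfold periodicSol
    congr 1
    refine intervalIntegral.integral_congr fun s _ => ?_
    have : t + 1 + s = t + s + 1 := by ring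
    rw [this, hper]
  have hode : ∀ t : ℝ, deriv g t + D (g t) = f t := by
    intro t
    rw [(hDeriv t).deriv]
    abel
  refine ⟨⟨hdiff, hgper, hode⟩, ?_⟩
  -- uniqueness
  intro h hhdiff hhper hhode
  set d : ℝ → W := fun t => h t - g t with hd_def
  set φ : ℝ → W := fun t => exp (t • D) (d t) with hφ_def
  have hdd : ∀ t : ℝ, HasDerivAt d (-(D (d t))) t := by
    intro t
    have h1 : HasDerivAt h (f t - D (h t)) t :=
      (eq_sub_of_add_eq (hhode t)) ▸ (hhdiff t).hasDerivAt
    have h2 : HasDerivAt g (f t - D (g t)) t := hDeriv t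
    have h3 := h1.sub h2
    convert h3 using 1
    · rfl
    simp only [hd_def, map_sub]
    abel
  have hφderiv : ∀ t : ℝ, HasDerivAt φ 0 t := by
    intro t
    have hP := hasDerivAt_exp_smul_const (𝕂 := ℝ) D t
    have h3 := hP.clm_apply (hdd t)
    convert h3 using 1
    simp only [ContinuousLinearMap.mul_apply, map_neg, add_neg_cancel]
  have hconst : ∀ x y : ℝ, φ x = φ y :=
    is_const_of_deriv_eq_zero (fun t => (hφderiv t).differentiableAt)
      (fun t => (hφderiv t).deriv)
  have hd0 : d 0 = 0 := by
    have h10 : φ 1 = φ 0 := hconst 1 0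
    have hd1 : d 1 = d 0 := by
      simp only [hd_def]
      rw [show (1:ℝ) = 0 + 1 by ring, hhper 0, hgper 0]
    have hexp : exp D (d 0) = d 0 := by
      have h' := h10
      simp only [hφ_def, one_smul, zero_smul, exp_zero, hd1,
        ContinuousLinearMap.one_apply] at h'
      exact h'
    have hA0 : (exp D - 1 : W →L[ℝ] W) (d 0) = 0 := by
      simp [ContinuousLinearMap.sub_apply, hexp]
    have hmul : Ring.inverse (exp D - 1 : W →L[ℝ] W) * (exp D - 1) = 1 :=
      Ring.inverse_mul_cancel _ hD
    calc d 0 = (Ring.inverse (exp D - 1 : W →L[ℝ] W) * (exp D - 1)) (d 0) := by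
          rw [hmul]; rfl
      _ = Ring.inverse (exp D - 1 : W →L[ℝ] W) ((exp D - 1 : W →L[ℝ] W) (d 0)) := rfl
      _ = 0 := by rw [hA0]; exact map_zero _
  funext t
  have hφt : φ t = 0 := by
    have h6 := hconst t 0
    simp only [hφ_def, zero_smul, exp_zero, ContinuousLinearMap.one_apply, hd0] at h6
    exact h6
  have hdt : d t = 0 := by
    have h7 := congrArg (fun x => exp ((-t) • D) x) hφt
    simp only [hφ_def] at h7
    calc d t = (exp ((-t) • D) * exp (t • D)) (d t) := by
          rw [expMulExpNeg D t]; rfl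
      _ = exp ((-t) • D) (exp (t • D) (d t)) := rfl
      _ = exp ((-t) • D) 0 := by rw [h7]
      _ = 0 := map_zero _
  exact sub_eq_zero.mp hdt
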